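/- (1) The quasi-compact open subsets of Spec_S R with respect to the S-flat topology are exactly the sets V_S(I) where I is a finitely generated ideal of R. (2) Spec_S R is quasi-compact with respect to the S-flat topology. (3) For an ideal I of R, V_S(I) is open with respect to the S-flat topology if and only if √[S](I) = √[S](J) for some finitely generated ideal J of R. -/

import Mathlib

/-- An ideal `P` is `S`-prime if `P ∩ S = ∅` and there is `s ∈ S` such that
whenever `a * b ∈ P`, either `s * a ∈ P` or `s * b ∈ P`. -/
def IsSPrime {R : Type*} [CommRing R] (S : Set R) (P : Ideal R) : Prop :=
  (P : Set R) ∩ S = ∅ ∧ ∃ s ∈ S, ∀ a b : R, a * b ∈ P → s * a ∈ P ∨ s * b ∈ P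

/-- The `S`-prime spectrum `Spec_S R`: the set of all `S`-prime ideals of `R`. -/
def SSpec {R : Type*} [CommRing R] (S : Set R) : Type _ :=
  {P : Ideal R // IsSPrime S P}

/-- The `S`-variety of an ideal `I`:
`V_S(I) = {P ∈ Spec_S R | s • I ⊆ P for some s ∈ S}`. -/
def SVar {R : Type*} [CommRing R] (S : Set R) (I : Ideal R) : Set (SSpec S) :=
  {P | ∃ s ∈ S, ∀ x ∈ I, s * x ∈ P.1}

/-- The `S`-radical of an ideal `I`:
`√[S](I) = {a ∈ R | s * a ^ n ∈ I for some s ∈ S, n ∈ ℕ}`. -/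
def SRad {R : Type*} [CommRing R] (S : Set R) (I : Ideal R) : Set R :=
  {a | ∃ s ∈ S, ∃ n : ℕ, s * a ^ n ∈ I}

/-- The `S`-Zariski topology on `Spec_S R`: the closed sets are exactly the `V_S(I)`. -/
def sZariskiTop {R : Type*} [CommRing R] (S : Set R) : TopologicalSpace (SSpec S) :=
  TopologicalSpace.generateFrom {U | ∃ I : Ideal R, U = (SVar S I)ᶜ}

/-- The `S`-flat topology on `Spec_S R`: the coarsest topology in which every
`V_S(f)`, `f ∈ R`, is open. -/
def sFlatTop {R : Type*} [CommRing R] (S : Set R) : TopologicalSpace (SSpec S) :=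
  TopologicalSpace.generateFrom {U | ∃ f : R, U = SVar S (Ideal.span {f})}

/-- An ideal `I` is `S`-radically finite if `√[S](I) = √[S](J)` for some finitely
generated ideal `J`. -/
def SRadFinite {R : Type*} [CommRing R] (S : Set R) (I : Ideal R) : Prop :=
  ∃ J : Ideal R, J.FG ∧ SRad S I = SRad S J

/-!
Two facts drive everything. An `S`-prime `P` with witness `u` avoids products uniformly: if
`s * a₁ ⋯ aₙ ∈ P` with `s ∈ S`, then `u * aᵢ ∈ P` for some `i`. And every prime ideal disjoint
from `S` is `S`-prime (with witness `1`), so Krull's separation of an ideal from a multiplicative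
set produces `S`-primes. Together they give `a ∈ √[S](I) ↔ V_S(I) ⊆ V_S(a)`, hence
`V_S(I) = V_S(J) ↔ √[S](I) = √[S](J)`. They also make every `V_S(I)` quasi-compact by
Alexander's subbasis theorem: if `V_S(I) ⊆ ⋃_{a ∈ A} V_S(a)`, then `I` meets the monoid generated
by `S ∪ A`, and a single element `s * a₁ ⋯ aₙ ∈ I` of it already yields the finite subcover
`V_S(a₁), …, V_S(aₙ)`. Since the `V_S(J)` with `J` finitely generated form a basis closed under
finite unions (`V_S(J) ∪ V_S(J') = V_S(J J')`), they are exactly the quasi-compact opens.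
-/

section

open Ideal TopologicalSpace

attribute [local instance] sFlatTop

variable {R : Type*} [CommRing R] {S : Submonoid R}

lemma Ideal.IsPrime.isSPrime {p : Ideal R} (hp : p.IsPrime) (hpS : Disjoint (p : Set R) S) :
    IsSPrime S p :=
  ⟨Set.disjoint_iff_inter_eq_empty.mp hpS, 1, S.one_mem,
    fun _ _ hab => by simpa only [one_mul] using hp.mem_or_mem hab⟩

lemma IsSPrime.exists_mul_mem_of_mem_closure {P : Ideal R} (hP : IsSPrime S P) :
    ∃ u ∈ S, ∀ {A : Set R} {x : R}, x ∈ Submonoid.closure A →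
      ∀ s ∈ S, s * x ∈ P → ∃ a ∈ A, u * a ∈ P := by
  obtain ⟨hPS, u, hu, hprime⟩ := hP
  have hS : ∀ s ∈ S, s ∉ P := fun s hs hsP =>
    (Set.disjoint_iff_inter_eq_empty.mpr hPS).notMem_of_mem_left hsP hs
  refine ⟨u, hu, fun {A x} hx => ?_⟩
  induction hx using Submonoid.closure_induction with
  | mem a ha =>
    intro s hs hsa
    exact ⟨a, ha, (hprime s a hsa).resolve_left (hS _ (S.mul_mem hu hs))⟩
  | one =>
    intro s hs hs1
    exact absurd (mul_one s ▸ hs1) (hS s hs)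
  | mul x y _ _ ihx ihy =>
    intro s hs hsxy
    rcases hprime (s * x) y (by rwa [mul_assoc]) with hsx | huy
    · exact ihx (u * s) (S.mul_mem hu hs) (by rwa [mul_assoc])
    · exact ihy u hu huy

lemma mem_sVar_span_singleton {P : SSpec S} {f : R} :
    P ∈ SVar S (span {f}) ↔ ∃ s ∈ S, s * f ∈ P.1 := by
  refine ⟨fun ⟨s, hs, h⟩ => ⟨s, hs, h f (mem_span_singleton_self f)⟩,
    fun ⟨s, hs, h⟩ => ⟨s, hs, fun x hx => ?_⟩⟩
  obtain ⟨c, rfl⟩ := mem_span_singleton'.mp hx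
  rw [mul_left_comm]
  exact P.1.mul_mem_left c h

lemma sVar_bot : SVar S (⊥ : Ideal R) = Set.univ :=
  Set.eq_univ_of_forall fun P => ⟨1, S.one_mem, fun x hx => by
    rw [mem_bot.mp hx, mul_zero]; exact P.1.zero_mem⟩

lemma sVar_top : SVar S (⊤ : Ideal R) = ∅ :=
  Set.eq_empty_of_forall_notMem fun P ⟨s, hs, h⟩ =>
    (Set.disjoint_iff_inter_eq_empty.mpr P.2.1).notMem_of_mem_left
      (mul_one s ▸ h 1 Submodule.mem_top) hs

lemma sVar_anti {I J : Ideal R} (h : I ≤ J) : SVar S J ⊆ SVar S I :=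
  fun _ ⟨s, hs, hJ⟩ => ⟨s, hs, fun x hx => hJ x (h hx)⟩

lemma sVar_sup (I J : Ideal R) : SVar S (I ⊔ J) = SVar S I ∩ SVar S J := by
  refine Set.Subset.antisymm
    (Set.subset_inter (sVar_anti le_sup_left) (sVar_anti le_sup_right)) ?_
  rintro P ⟨⟨s, hs, hsI⟩, ⟨t, ht, htJ⟩⟩
  refine ⟨s * t, S.mul_mem hs ht, fun x hx => ?_⟩
  obtain ⟨y, hy, z, hz, rfl⟩ := Submodule.mem_sup.mp hx
  rw [show s * t * (y + z) = t * (s * y) + s * (t * z) by ring]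
  exact P.1.add_mem (P.1.mul_mem_left _ (hsI y hy)) (P.1.mul_mem_left _ (htJ z hz))

lemma sVar_mul (I J : Ideal R) : SVar S (I * J) = SVar S I ∪ SVar S J := by
  refine Set.Subset.antisymm ?_
    (Set.union_subset (sVar_anti Ideal.mul_le_left) (sVar_anti Ideal.mul_le_right))
  rintro P ⟨s, hs, hsIJ⟩
  obtain ⟨-, u, hu, hprime⟩ := P.2
  by_cases hI : ∀ a ∈ I, u * s * a ∈ P.1
  · exact Or.inl ⟨u * s, S.mul_mem hu hs, hI⟩
  obtain ⟨a, ha, husa⟩ := not_forall₂.mp hI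
  refine Or.inr ⟨u, hu, fun b hb => ?_⟩
  have hsab : s * a * b ∈ P.1 := by rw [mul_assoc]; exact hsIJ _ (mul_mem_mul ha hb)
  exact (hprime _ _ hsab).resolve_left (by rwa [← mul_assoc])

lemma exists_mul_mem_of_mem_sVar {I : Ideal R} {P : SSpec S} (hP : P ∈ SVar S I) :
    ∃ u ∈ S, ∀ {A : Set R} {s x : R}, s ∈ S → x ∈ Submonoid.closure A → s * x ∈ I →
      ∃ a ∈ A, u * a ∈ P.1 := by
  obtain ⟨t, ht, htI⟩ := hP
  obtain ⟨u, hu, hP⟩ := P.2.exists_mul_mem_of_mem_closure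
  exact ⟨u, hu, fun {A s x} hs hx hsx =>
    hP hx (t * s) (S.mul_mem ht hs) (by rw [mul_assoc]; exact htI _ hsx)⟩

lemma exists_forall_mem_sRad_mul_mem {I : Ideal R} {P : SSpec S} (hP : P ∈ SVar S I) :
    ∃ u ∈ S, ∀ a ∈ SRad S I, u * a ∈ P.1 := by
  obtain ⟨u, hu, hP⟩ := exists_mul_mem_of_mem_sVar hP
  refine ⟨u, hu, fun a ⟨s, hs, n, hsa⟩ => ?_⟩
  obtain ⟨_, rfl, hua⟩ := hP hs (pow_mem (Submonoid.subset_closure rfl) n) hsa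
  exact hua

lemma subset_sRad (I : Ideal R) : (I : Set R) ⊆ SRad S I :=
  fun x hx => ⟨1, S.one_mem, 1, by simpa using hx⟩

lemma sVar_subset_of_subset_sRad {I J : Ideal R} (h : (J : Set R) ⊆ SRad S I) :
    SVar S I ⊆ SVar S J := fun _ hP =>
  let ⟨u, hu, hP⟩ := exists_forall_mem_sRad_mul_mem hP
  ⟨u, hu, fun x hx => hP x (h hx)⟩

lemma exists_mem_sVar_disjoint {I : Ideal R} {M : Submonoid R} (hSM : S ≤ M)
    (hIM : Disjoint (I : Set R) M) :
    ∃ P : SSpec S, P ∈ SVar S I ∧ Disjoint (P.1 : Set R) M := by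
  obtain ⟨p, hp, hIp, hpM⟩ := I.exists_le_prime_disjoint M hIM
  exact ⟨⟨p, hp.isSPrime (hpM.mono_right hSM)⟩,
    ⟨1, S.one_mem, fun x hx => by simpa using hIp hx⟩, hpM⟩

lemma mem_sRad_iff_sVar_subset {I : Ideal R} {a : R} :
    a ∈ SRad S I ↔ SVar S I ⊆ SVar S (span {a}) := by
  refine ⟨fun ha P hP => ?_, fun h => ?_⟩
  · obtain ⟨u, hu, hP⟩ := exists_forall_mem_sRad_mul_mem hP
    exact mem_sVar_span_singleton.mpr ⟨u, hu, hP a ha⟩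
  · by_contra ha
    have hIM : Disjoint (I : Set R) (S ⊔ Submonoid.powers a : Submonoid R) := by
      refine Set.disjoint_right.mpr fun x hx hxI => ha ?_
      obtain ⟨s, hs, _, ⟨n, rfl⟩, rfl⟩ := Submonoid.mem_sup.mp hx
      exact ⟨s, hs, n, hxI⟩
    obtain ⟨P, hPI, hPM⟩ := exists_mem_sVar_disjoint le_sup_left hIM
    obtain ⟨s, hs, hsa⟩ := mem_sVar_span_singleton.mp (h hPI)
    exact hPM.notMem_of_mem_left hsa (Submonoid.mul_mem_sup hs (Submonoid.mem_powers a))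

theorem sVar_eq_sVar_iff {I J : Ideal R} : SVar S I = SVar S J ↔ SRad S I = SRad S J := by
  refine ⟨fun h => Set.ext fun a => ?_, fun h => ?_⟩
  · rw [mem_sRad_iff_sVar_subset, mem_sRad_iff_sVar_subset, h]
  · exact (sVar_subset_of_subset_sRad ((subset_sRad J).trans h.ge)).antisymm
      (sVar_subset_of_subset_sRad ((subset_sRad I).trans h.le))

lemma exists_fg_sVar_eq_biUnion {ι : Type*} {J : ι → Ideal R} (hJ : ∀ i, (J i).FG)
    {s : Set ι} (hs : s.Finite) : ∃ I : Ideal R, I.FG ∧ SVar S I = ⋃ i ∈ s, SVar S (J i) := by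
  induction s, hs using Set.Finite.induction_on with
  | empty => exact ⟨⊤, ⟨{1}, by simp⟩, by simp [sVar_top]⟩
  | @insert i s _ _ ih =>
    obtain ⟨I, hI, hIs⟩ := ih
    exact ⟨J i * I, (hJ i).mul hI, by rw [sVar_mul, hIs, Set.biUnion_insert]⟩

lemma isOpen_sVar_of_fg {J : Ideal R} (hJ : J.FG) : IsOpen (SVar S J) := by
  induction J, hJ using Submodule.fg_induction with
  | singleton f => exact isOpen_generateFrom_of_mem ⟨f, rfl⟩
  | sup I J _ _ hI hJ => rw [sVar_sup]; exact hI.inter hJ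

lemma exists_finset_sVar_subset_biUnion {I : Ideal R} {A : Set R}
    (h : SVar S I ⊆ ⋃ a ∈ A, SVar S (span {a})) :
    ∃ t : Finset R, ↑t ⊆ A ∧ SVar S I ⊆ ⋃ a ∈ t, SVar S (span {a}) := by
  by_cases hIM : Disjoint (I : Set R) (S ⊔ Submonoid.closure A : Submonoid R)
  · obtain ⟨P, hPI, hPM⟩ := exists_mem_sVar_disjoint le_sup_left hIM
    obtain ⟨a, ha, hPa⟩ := Set.mem_iUnion₂.mp (h hPI)
    obtain ⟨s, hs, hsa⟩ := mem_sVar_span_singleton.mp hPa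
    exact absurd (Submonoid.mul_mem_sup hs (Submonoid.subset_closure ha))
      (hPM.notMem_of_mem_left hsa)
  obtain ⟨_, hxI, hxM⟩ := Set.not_disjoint_iff.mp hIM
  obtain ⟨s, hs, x, hx, rfl⟩ := Submonoid.mem_sup.mp hxM
  obtain ⟨e, t, htA, he, rfl⟩ := Submonoid.mem_closure_iff_exists_finset_subset.mp hx
  have hxt : ∏ a ∈ t, a ^ e a ∈ Submonoid.closure (t : Set R) :=
    Submonoid.mem_closure_iff_exists_finset_subset.mpr ⟨e, t, subset_rfl, he, rfl⟩
  refine ⟨t, htA, fun P hP => ?_⟩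
  obtain ⟨u, hu, hP⟩ := exists_mul_mem_of_mem_sVar hP
  obtain ⟨a, ha, hua⟩ := hP hs hxt hxI
  exact Set.mem_biUnion ha (mem_sVar_span_singleton.mpr ⟨u, hu, hua⟩)

lemma isCompact_sVar (I : Ideal R) : IsCompact (SVar S I) := by
  refine isCompact_generateFrom rfl fun 𝒰 h𝒰 hI => ?_
  obtain ⟨t, ht𝒰, hIt⟩ :=
    exists_finset_sVar_subset_biUnion (A := {a | SVar S (span {a}) ∈ 𝒰}) fun P hP => by
      obtain ⟨U, hU, hPU⟩ := Set.mem_sUnion.mp (hI hP)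
      obtain ⟨a, rfl⟩ := h𝒰 hU
      exact Set.mem_biUnion hU hPU
  refine ⟨_, Set.image_subset_iff.mpr ht𝒰, t.finite_toSet.image _, ?_⟩
  rwa [Set.sUnion_image]

lemma isTopologicalBasis_sVar_fg :
    IsTopologicalBasis (Set.range fun J : {J : Ideal R // J.FG} => SVar S J.1) := by
  refine ⟨?_, ?_, ?_⟩
  · rintro _ ⟨⟨J₁, h₁⟩, rfl⟩ _ ⟨⟨J₂, h₂⟩, rfl⟩ P hP
    exact ⟨_, ⟨⟨J₁ ⊔ J₂, Submodule.FG.sup h₁ h₂⟩, rfl⟩, (sVar_sup J₁ J₂).ge hP,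
      (sVar_sup J₁ J₂).le⟩
  · exact Set.sUnion_eq_univ_iff.mpr fun P =>
      ⟨_, ⟨⟨⊥, Submodule.fg_bot⟩, rfl⟩, show P ∈ SVar S ⊥ by rw [sVar_bot]; trivial⟩
  · refine le_antisymm (le_generateFrom ?_) (generateFrom_anti ?_)
    · rintro _ ⟨J, rfl⟩
      exact isOpen_sVar_of_fg J.2
    · rintro _ ⟨f, rfl⟩
      exact ⟨⟨span {f}, Submodule.fg_span_singleton f⟩, rfl⟩

theorem isCompact_and_isOpen_iff_eq_sVar_fg {U : Set (SSpec (S : Set R))} :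
    IsCompact U ∧ IsOpen U ↔ ∃ I : Ideal R, I.FG ∧ U = SVar S I := by
  refine ⟨fun hU => ?_, fun ⟨I, hI, hU⟩ => hU ▸ ⟨isCompact_sVar I, isOpen_sVar_of_fg hI⟩⟩
  obtain ⟨s, hs, rfl⟩ := (isCompact_open_iff_eq_finite_iUnion_of_isTopologicalBasis _
    isTopologicalBasis_sVar_fg (fun J => isCompact_sVar J.1) U).mp hU
  obtain ⟨I, hI, hIs⟩ := exists_fg_sVar_eq_biUnion (fun J : {J : Ideal R // J.FG} => J.2) hs
  exact ⟨I, hI, hIs.symm⟩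

end

theorem sFlat_compact_open_characterizations_general {R : Type*} [CommRing R]
    (S : Set R)
    (hS1 : (1 : R) ∈ S) (hSmul : ∀ s ∈ S, ∀ t ∈ S, s * t ∈ S) :
    (∀ U : Set (SSpec S),
        (@IsCompact (SSpec S) (sFlatTop S) U ∧ @IsOpen (SSpec S) (sFlatTop S) U) ↔
          ∃ I : Ideal R, I.FG ∧ U = SVar S I) ∧
    @IsCompact (SSpec S) (sFlatTop S) Set.univ ∧
    ∀ I : Ideal R,
      @IsOpen (SSpec S) (sFlatTop S) (SVar S I) ↔
        ∃ J : Ideal R, J.FG ∧ SRad S I = SRad S J := by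
  obtain ⟨S, rfl⟩ : ∃ M : Submonoid R, (M : Set R) = S :=
    ⟨{ carrier := S, mul_mem' := fun ha hb => hSmul _ ha _ hb, one_mem' := hS1 }, rfl⟩
  refine ⟨fun U => isCompact_and_isOpen_iff_eq_sVar_fg, sVar_bot (S := S) ▸ isCompact_sVar ⊥,
    fun I => ⟨fun hI => ?_, fun ⟨J, hJ, hIJ⟩ => ?_⟩⟩
  · obtain ⟨J, hJ, hIJ⟩ := isCompact_and_isOpen_iff_eq_sVar_fg.mp ⟨isCompact_sVar I, hI⟩
    exact ⟨J, hJ, sVar_eq_sVar_iff.mp hIJ⟩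
  · rw [sVar_eq_sVar_iff.mpr hIJ]
    exact isOpen_sVar_of_fg hJ

/-- (1) The quasi-compact open subsets of `Spec_S R` for the `S`-flat topology are
exactly the `V_S(I)` with `I` finitely generated; (2) `Spec_S R` is quasi-compact for
the `S`-flat topology; (3) `V_S(I)` is `S`-flat open iff `√[S](I) = √[S](J)` for some
finitely generated ideal `J`. -/
theorem sFlat_compact_open_characterizations {R : Type*} [CommRing R] [Nontrivial R]
    (S : Set R)
    (hS0 : (0 : R) ∉ S) (hS1 : (1 : R) ∈ S) (hSmul : ∀ s ∈ S, ∀ t ∈ S, s * t ∈ S) :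
    (∀ U : Set (SSpec S),
        (@IsCompact (SSpec S) (sFlatTop S) U ∧ @IsOpen (SSpec S) (sFlatTop S) U) ↔
          ∃ I : Ideal R, I.FG ∧ U = SVar S I) ∧
    @IsCompact (SSpec S) (sFlatTop S) Set.univ ∧
    ∀ I : Ideal R,
      @IsOpen (SSpec S) (sFlatTop S) (SVar S I) ↔
        ∃ J : Ideal R, J.FG ∧ SRad S I = SRad S J :=
  sFlat_compact_open_characterizations_general S hS1 hSmul
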